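/- Let T_{f[l,r]} be a right permutative linear cellular automaton over Z_m with 0 < l ≤ r (i.e., gcd(λ_r, m) = 1 and l > 0). Then T_{f[l,r]} is strong mixing with respect to the uniform Bernoulli measure: for any two cylinder sets A, B, lim_{n→∞} μ(A ∩ T^{-n}B) = μ(A)μ(B). -/

import Mathlib

open MeasureTheory Filter
open scoped ENNReal Topology

instance (m : ℕ) : MeasurableSpace (ZMod m) := ⊤

/-!
Once `a + s < b + n l`, the two events are exactly independent. The cells
`(Tⁿx)(b), …, (Tⁿx)(b + t)` only see `x` on `[b + n l, b + t + n r] ⊆ [a, b + t + n r]`, and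
`(Tⁿx)(b + u) = λ_rⁿ x(b + u + n r) + (terms in cells left of b + u + n r)`. Since `λ_r` is a
unit, for each pattern of `x` on `[a, b + n r)` the map from the pattern on
`[b + n r, b + n r + t]` to `(Tⁿx)(b), …, (Tⁿx)(b + t)` is triangular with invertible
diagonal, hence a bijection. Counting patterns on the window `[a, b + t + n r]` then gives
`μ(A ∩ T⁻ⁿB) = μ(A) μ(B)` for all large `n`.
-/

open Finset

section LinearCA

variable {R : Type*} [Ring R] (l r : ℤ) (lam : ℤ → R)

noncomputable def linearCA : (ℤ → R) →+ (ℤ → R) where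
  toFun x n := ∑ i ∈ Icc l r, lam i * x (n + i)
  map_zero' := by ext; simp
  map_add' x y := by ext; simp [mul_add, sum_add_distrib]

theorem linearCA_apply (x : ℤ → R) (n : ℤ) :
    linearCA l r lam x n = ∑ i ∈ Icc l r, lam i * x (n + i) := rfl

theorem linearCA_iterate_congr (n : ℕ) {x y : ℤ → R} {p : ℤ}
    (h : ∀ q, p + n * l ≤ q → q ≤ p + n * r → x q = y q) :
    (linearCA l r lam)^[n] x p = (linearCA l r lam)^[n] y p := by
  induction n generalizing x y with
  | zero => simpa using h p
  | succ n ih =>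
    refine ih fun q hq₁ hq₂ => ?_
    rw [linearCA_apply, linearCA_apply]
    refine sum_congr rfl fun i hi => ?_
    rw [mem_Icc] at hi
    rw [h (q + i) (by push_cast; linarith) (by push_cast; linarith)]

theorem linearCA_iterate_apply_of_eq_zero (hlr : l ≤ r) (n : ℕ) {z : ℤ → R} {p : ℤ}
    (hz : ∀ q, p + n * l ≤ q → q < p + n * r → z q = 0) :
    (linearCA l r lam)^[n] z p = lam r ^ n * z (p + n * r) := by
  induction n generalizing z with
  | zero => simp
  | succ n ih =>
    have hnlr : (n : ℤ) * l ≤ n * r := mul_le_mul_of_nonneg_left hlr n.cast_nonneg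
    have hTz : ∀ q, p + n * l ≤ q → q < p + n * r → linearCA l r lam z q = 0 := by
      intro q hq₁ hq₂
      rw [linearCA_apply]
      refine sum_eq_zero fun i hi => ?_
      rw [mem_Icc] at hi
      rw [hz (q + i) (by push_cast; linarith) (by push_cast; linarith), mul_zero]
    rw [Function.iterate_succ_apply, ih hTz, linearCA_apply,
      sum_eq_single_of_mem r (right_mem_Icc.2 hlr), pow_succ, mul_assoc]
    · push_cast; ring_nf
    · intro i hi hir
      rw [mem_Icc] at hi
      have : i < r := lt_of_le_of_ne hi.2 hir
      rw [hz _ (by push_cast; linarith) (by push_cast; linarith), mul_zero]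

theorem eq_of_linearCA_iterate_eq (hlr : l ≤ r) (hr : IsUnit (lam r)) (n N : ℕ)
    {x y : ℤ → R} {c p : ℤ} (hc : c ≤ p + n * l)
    (hxy : ∀ q, c ≤ q → q < p + n * r → x q = y q)
    (hT : ∀ u < N, (linearCA l r lam)^[n] x (p + u) = (linearCA l r lam)^[n] y (p + u)) :
    ∀ q, c ≤ q → q < p + n * r + N → x q = y q := by
  induction N with
  | zero => simpa using hxy
  | succ N ih =>
    have ih := ih fun u hu => hT u (by omega)
    intro q hq₁ hq₂
    rcases (show q < p + n * r + N ∨ q = p + n * r + N by push_cast at hq₂; omega) with hq | rfl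
    · exact ih q hq₁ hq
    have hzero := linearCA_iterate_apply_of_eq_zero l r lam hlr n (z := x - y) (p := p + N)
      fun q' h₁ h₂ =>
        sub_eq_zero.2 (ih q' (by linarith [N.cast_nonneg (α := ℤ)]) (by linarith))
    rw [iterate_map_sub, Pi.sub_apply, hT N (by omega), sub_self, Pi.sub_apply,
      show p + N + n * r = p + n * r + N by ring] at hzero
    exact sub_eq_zero.1 ((hr.pow n).mul_right_eq_zero.1 hzero.symm)

end LinearCA

section Window

variable {α : Type*}

def window (c : ℤ) (L : ℕ) (x : ℤ → α) : Fin L → α := fun i => x (c + (i : ℕ))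

def intervalCylinder (c : ℤ) (s : ℕ) (j : ℕ → α) : Set (ℤ → α) :=
  {x | ∀ u : ℕ, u ≤ s → x (c + u) = j u}

noncomputable def extendWindow [Zero α] (c : ℤ) (L : ℕ) (g : Fin L → α) : ℤ → α :=
  Function.extend (fun i : Fin L => c + (i : ℕ)) g 0

theorem window_eq_window_iff {c : ℤ} {L : ℕ} {x y : ℤ → α} :
    window c L x = window c L y ↔ ∀ q, c ≤ q → q < c + L → x q = y q := by
  refine ⟨fun h q hq₁ hq₂ => ?_, fun h => funext fun i => h _ (by omega) (by omega)⟩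
  obtain ⟨k, rfl⟩ : ∃ k : ℕ, c + k = q := ⟨(q - c).toNat, by omega⟩
  exact congrFun h ⟨k, by omega⟩

theorem window_add (c : ℤ) (K L : ℕ) (x : ℤ → α) :
    window c (K + L) x = Fin.append (window c K x) (window (c + K) L x) := by
  funext i
  refine Fin.addCases (fun i => ?_) (fun i => ?_) i
  · simp [window]
  · simp [window, add_assoc]

theorem window_extendWindow [Zero α] (c : ℤ) (L : ℕ) (g : Fin L → α) :
    window c L (extendWindow c L g) = g := by
  have hinj : Function.Injective (fun i : Fin L => c + (i : ℕ)) :=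
    fun i j h => Fin.ext (by simpa using h)
  exact funext fun i => hinj.extend_apply g 0 i

theorem extendWindow_window_apply [Zero α] (c : ℤ) (L : ℕ) (x : ℤ → α) :
    ∀ q, c ≤ q → q < c + L → extendWindow c L (window c L x) q = x q :=
  window_eq_window_iff.1 (window_extendWindow c L _)

theorem window_extendWindow_append [Zero α] (c : ℤ) {K L : ℕ} (g : Fin K → α)
    (h : Fin L → α) :
    window c K (extendWindow c (K + L) (Fin.append g h)) = g ∧
      window (c + K) L (extendWindow c (K + L) (Fin.append g h)) = h := by
  set z := extendWindow c (K + L) (Fin.append g h)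
  have := window_add c K L z
  rw [window_extendWindow] at this
  exact Prod.ext_iff.1 ((Fin.appendEquiv K L).injective
    (a₁ := (window c K z, window (c + K) L z)) (a₂ := (g, h)) this.symm)

theorem intervalCylinder_eq_preimage_window [Fintype α] [DecidableEq α] (c : ℤ) {s L : ℕ}
    (hsL : s < L) (j : ℕ → α) :
    intervalCylinder c s j =
      window c L ⁻¹'
        ↑(univ.filter fun g : Fin L → α => ∀ i : Fin L, (i : ℕ) ≤ s → g i = j i) := by
  ext x
  simp only [intervalCylinder, Set.mem_preimage, coe_filter, mem_univ, true_and]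
  exact ⟨fun h i hi => h i hi, fun h u hu => h ⟨u, by omega⟩ hu⟩

end Window

theorem injective_window_linearCA_iterate_extendWindow_append {R : Type*} [Ring R] {l r : ℤ}
    (hlr : l ≤ r) {lam : ℤ → R} (hr : IsUnit (lam r)) {a b : ℤ} {K n : ℕ} (N : ℕ)
    (hK : a + K = b + n * r) (hab : a ≤ b + n * l) (g : Fin K → R) :
    Function.Injective fun h : Fin N → R =>
      window b N ((linearCA l r lam)^[n] (extendWindow a (K + N) (Fin.append g h))) := by
  intro h h' hgh
  obtain ⟨hg, hh⟩ := window_extendWindow_append a g h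
  obtain ⟨hg', hh'⟩ := window_extendWindow_append a g h'
  rw [← hh, ← hh', window_eq_window_iff]
  intro q hq₁ hq₂
  refine eq_of_linearCA_iterate_eq l r lam hlr hr n N hab
    (fun q hq₁ hq₂ => window_eq_window_iff.1 (hg.trans hg'.symm) q hq₁ (by omega))
    (fun u hu => congrFun hgh ⟨u, hu⟩) q (by omega) (by omega)

theorem card_filter_product_apply_mem {β γ : Type*} [Fintype γ] [DecidableEq γ] (A : Finset β)
    (B : Finset γ) (G : β → γ → γ) (hG : ∀ g, Function.Injective (G g)) :
    #((A ×ˢ univ).filter fun p => G p.1 p.2 ∈ B) = #A * #B := by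
  have hfiber (g : β) : ∑ h, (if G g h ∈ B then 1 else 0) = #B := by
    rw [(hG g).bijective_of_finite.sum_comp (fun v => if v ∈ B then 1 else 0)]
    simp
  rw [card_filter, sum_product]
  simp [hfiber]

section IntervalCylinderMeasure

variable {α : Type*} [MeasurableSpace α] [MeasurableSingletonClass α] [Zero α]
  {μ : Measure (ℤ → α)} {κ : ℝ≥0∞}
  (hμ : ∀ c s j, μ (intervalCylinder c s j) = κ ^ (s + 1))
include hμ

theorem measure_preimage_window (c : ℤ) {L : ℕ} (hL : 0 < L) (S : Finset (Fin L → α)) :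
    μ (window c L ⁻¹' S) = #S * κ ^ L := by
  obtain ⟨s, rfl⟩ : ∃ s, L = s + 1 := ⟨L - 1, by omega⟩
  have hfiber (g : Fin (s + 1) → α) : window c (s + 1) ⁻¹' {g} =
      intervalCylinder c s fun u => if h : u < s + 1 then g ⟨u, h⟩ else 0 := by
    ext x
    simp only [intervalCylinder, window, Set.mem_preimage, Set.mem_singleton_iff, funext_iff,
      Fin.forall_iff]
    exact forall_congr' fun u => ⟨fun h hu => by rw [dif_pos (by omega)]; exact h (by omega),
      fun h hu => by rw [h (by omega), dif_pos hu]⟩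
  have hmeas : Measurable (window (α := α) c (s + 1)) :=
    measurable_pi_lambda _ fun i => measurable_pi_apply _
  rw [← sum_measure_preimage_singleton S fun g _ => hmeas (measurableSet_singleton g)]
  simp [hfiber, hμ]

theorem measure_window_append_mem (c : ℤ) (K : ℕ) {L : ℕ} (hL : 0 < L)
    (S : Finset ((Fin K → α) × (Fin L → α))) :
    μ {x | (window c K x, window (c + K) L x) ∈ S} = #S * κ ^ (K + L) := by
  have hS : {x | (window c K x, window (c + K) L x) ∈ S} =
      window c (K + L) ⁻¹' ↑(S.map (Fin.appendEquiv K L).toEmbedding) := by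
    ext x
    simp [window_add]
  rw [hS, measure_preimage_window hμ c (by omega), card_map]

end IntervalCylinderMeasure

theorem measure_inter_preimage_linearCA_iterate {R : Type*} [Ring R] [Fintype R]
    [DecidableEq R] [MeasurableSpace R] [MeasurableSingletonClass R] {μ : Measure (ℤ → R)}
    {κ : ℝ≥0∞} (hμ : ∀ c s j, μ (intervalCylinder c s j) = κ ^ (s + 1))
    {l r : ℤ} (hlr : l ≤ r) {lam : ℤ → R} (hr : IsUnit (lam r))
    (a b : ℤ) (s t : ℕ) (iv jv : ℕ → R) {n : ℕ} (hn : a + s < b + n * l) :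
    μ (intervalCylinder a s iv ∩ (linearCA l r lam)^[n] ⁻¹' intervalCylinder b t jv) =
      μ (intervalCylinder a s iv) * μ (intervalCylinder b t jv) := by
  set T := linearCA l r lam
  have hnlr : (n : ℤ) * l ≤ n * r := mul_le_mul_of_nonneg_left hlr n.cast_nonneg
  obtain ⟨K, hK⟩ : ∃ K : ℕ, a + K = b + n * r := ⟨(b + n * r - a).toNat, by omega⟩
  have hsK : s < K := by omega
  set M := K + (t + 1)
  let G (g : Fin K → R) (h : Fin (t + 1) → R) : Fin (t + 1) → R :=
    window b (t + 1) (T^[n] (extendWindow a M (Fin.append g h)))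
  have hG (x : ℤ → R) :
      window b (t + 1) (T^[n] x) = G (window a K x) (window (a + K) (t + 1) x) := by
    funext u
    refine linearCA_iterate_congr l r lam n fun q hq₁ hq₂ => ?_
    rw [← window_add, extendWindow_window_apply a M x q (by omega) (by omega)]
  set A := univ.filter fun g : Fin K → R => ∀ i : Fin K, (i : ℕ) ≤ s → g i = iv i
  set B := univ.filter fun h : Fin (t + 1) → R =>
    ∀ i : Fin (t + 1), (i : ℕ) ≤ t → h i = jv i
  have hA := intervalCylinder_eq_preimage_window a hsK iv
  have hB := intervalCylinder_eq_preimage_window b (Nat.lt_add_one t) jv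
  have hAB : intervalCylinder a s iv ∩ T^[n] ⁻¹' intervalCylinder b t jv =
      {x | (window a K x, window (a + K) (t + 1) x) ∈
        (A ×ˢ univ).filter fun p => G p.1 p.2 ∈ B} := by
    ext x
    simp [hA, hB, hG, A, B]
  rw [hAB, measure_window_append_mem hμ a K (Nat.succ_pos t),
    card_filter_product_apply_mem A B G
      (injective_window_linearCA_iterate_extendWindow_append hlr hr (t + 1) hK (by omega)),
    hA, hB, measure_preimage_window hμ a (by omega),
    measure_preimage_window hμ b (Nat.succ_pos t), pow_add]
  push_cast
  ring

instance (m : ℕ) : MeasurableSingletonClass (ZMod m) :=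
  ⟨fun _ => MeasurableSpace.measurableSet_top⟩

theorem stmt11_general (m : ℕ) (hm : 2 ≤ m) (l r : ℤ) (hl : 0 < l) (hlr : l ≤ r)
    (lam : ℤ → ZMod m) (hperm : IsUnit (lam r))
    (T : (ℤ → ZMod m) → ℤ → ZMod m)
    (hT : ∀ x n, T x n = ∑ i ∈ Finset.Icc l r, lam i * x (n + i))
    (μ : Measure (ℤ → ZMod m))
    (hμ : ∀ (a : ℤ) (s : ℕ) (j : ℕ → ZMod m),
      μ {x | ∀ t : ℕ, t ≤ s → x (a + (t : ℤ)) = j t} = ((m : ℝ≥0∞))⁻¹ ^ (s + 1)) :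
    ∀ (a b : ℤ) (s t : ℕ) (iv jv : ℕ → ZMod m),
      Tendsto
        (fun n : ℕ =>
          μ ({x | ∀ u : ℕ, u ≤ s → x (a + (u : ℤ)) = iv u} ∩
             T^[n] ⁻¹' {x | ∀ u : ℕ, u ≤ t → x (b + (u : ℤ)) = jv u}))
        atTop
        (𝓝 (μ {x | ∀ u : ℕ, u ≤ s → x (a + (u : ℤ)) = iv u} *
            μ {x | ∀ u : ℕ, u ≤ t → x (b + (u : ℤ)) = jv u})) := by
  intro a b s t iv jv
  have : NeZero m := ⟨by omega⟩
  obtain rfl : T = linearCA l r lam := funext fun x => funext (hT x)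
  have hsep : ∀ᶠ n : ℕ in atTop, a + s < b + n * l :=
    ((tendsto_natCast_atTop_atTop (R := ℤ)).atTop_mul_const' hl).eventually_gt_atTop (a + s - b)
      |>.mono fun n hn => by linarith
  exact tendsto_const_nhds.congr' <| hsep.mono fun n hn =>
    (measure_inter_preimage_linearCA_iterate hμ hlr hperm a b s t iv jv hn).symm

/-- A right permutative linear cellular automaton `T_{f[l,r]}` over `ZMod m` with
`0 < l ≤ r` (i.e. `gcd(λ_r, m) = 1`, so `λ_r` is a unit, and `l > 0`) is strong mixing
for the uniform Bernoulli measure: for any two cylinder sets `A`, `B`,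
`lim_{n→∞} μ(A ∩ T^{-n}B) = μ(A)·μ(B)`. -/
theorem stmt11 (m : ℕ) (hm : 2 ≤ m) (l r : ℤ) (hl : 0 < l) (hlr : l ≤ r)
    (lam : ℤ → ZMod m) (hperm : IsUnit (lam r))
    (T : (ℤ → ZMod m) → ℤ → ZMod m)
    (hT : ∀ x n, T x n = ∑ i ∈ Finset.Icc l r, lam i * x (n + i))
    (μ : Measure (ℤ → ZMod m)) [IsProbabilityMeasure μ]
    (hμ : ∀ (a : ℤ) (s : ℕ) (j : ℕ → ZMod m),
      μ {x | ∀ t : ℕ, t ≤ s → x (a + (t : ℤ)) = j t} = ((m : ℝ≥0∞))⁻¹ ^ (s + 1)) :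
    ∀ (a b : ℤ) (s t : ℕ) (iv jv : ℕ → ZMod m),
      Tendsto
        (fun n : ℕ =>
          μ ({x | ∀ u : ℕ, u ≤ s → x (a + (u : ℤ)) = iv u} ∩
             T^[n] ⁻¹' {x | ∀ u : ℕ, u ≤ t → x (b + (u : ℤ)) = jv u}))
        atTop
        (𝓝 (μ {x | ∀ u : ℕ, u ≤ s → x (a + (u : ℤ)) = iv u} *
            μ {x | ∀ u : ℕ, u ≤ t → x (b + (u : ℤ)) = jv u})) :=
  stmt11_general m hm l r hl hlr lam hperm T hT μ hμ
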